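/- In QLP extended with a fixed point constant δ and the axiom δ ↔ [(∃x)x:¬δ ∨ (E ∧ ¬(∃x)x:(δ → E))] for a propositional letter E (and F = ∅), the system is inconsistent. -/

import Mathlib

/-- Justification terms of Fitting's quantified logic of proofs QLP:
variables, primitive terms `f(x₁,…,xₙ)` (a function symbol applied to
justification variables), application `·`, sum `+`, proof checker `!`, and
the uniform verifier `(t ∀ x)` (which binds `x`). -/
inductive Tm : Type
  | var : ℕ → Tm
  | prim : ℕ → List ℕ → Tm
  | app : Tm → Tm → Tm
  | sum : Tm → Tm → Tm
  | bang : Tm → Tm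
  | uall : Tm → ℕ → Tm

/-- Free justification variables of a term. -/
def Tm.fv : Tm → Finset ℕ
  | .var x => {x}
  | .prim _ xs => xs.toFinset
  | .app s t => s.fv ∪ t.fv
  | .sum s t => s.fv ∪ t.fv
  | .bang t => t.fv
  | .uall t x => t.fv.erase x

/-- Substitution of a term for a justification variable in a term. -/
def Tm.substT (s : Tm) (x : ℕ) : Tm → Tm
  | .var y => if y = x then s else .var y
  | .prim f xs => .prim f xs
  | .app a b => .app (Tm.substT s x a) (Tm.substT s x b)
  | .sum a b => .sum (Tm.substT s x a) (Tm.substT s x b)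
  | .bang a => .bang (Tm.substT s x a)
  | .uall a y => if y = x then .uall a y else .uall (Tm.substT s x a) y

/-- `FreeForT s x t`: the term `s` is substitutable ("free for") the variable
`x` in the term `t` (no variable of `s` gets captured, and `x` does not occur
inside a primitive term). -/
def FreeForT (s : Tm) (x : ℕ) : Tm → Prop
  | .var _ => True
  | .prim _ xs => x ∉ xs
  | .app a b => FreeForT s x a ∧ FreeForT s x b
  | .sum a b => FreeForT s x a ∧ FreeForT s x b
  | .bang a => FreeForT s x a
  | .uall a y => x ∈ Tm.fv (.uall a y) → (y ∉ s.fv ∧ FreeForT s x a)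

/-- Formulas of QLP, with quantifiers over justification variables. -/
inductive Fm : Type
  | atom : ℕ → Fm
  | delta : Fm
  | bot : Fm
  | imp : Fm → Fm → Fm
  | just : Tm → Fm → Fm
  | all : ℕ → Fm → Fm
  | ex : ℕ → Fm → Fm

namespace Fm

def neg (A : Fm) : Fm := imp A bot
def disj (A B : Fm) : Fm := imp (neg A) B
def conj (A B : Fm) : Fm := neg (imp A (neg B))
def iff' (A B : Fm) : Fm := conj (imp A B) (imp B A)
/-- Exclusive disjunction. -/
def xor' (A B : Fm) : Fm := conj (disj A B) (neg (conj A B))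

/-- Free justification variables of a formula. -/
def fv : Fm → Finset ℕ
  | atom _ => ∅
  | delta => ∅
  | bot => ∅
  | imp A B => A.fv ∪ B.fv
  | just t A => t.fv ∪ A.fv
  | all x A => A.fv.erase x
  | ex x A => A.fv.erase x

/-- Substitution of a term for a justification variable in a formula. -/
def subst (s : Tm) (x : ℕ) : Fm → Fm
  | atom p => atom p
  | delta => delta
  | bot => bot
  | imp A B => imp (A.subst s x) (B.subst s x)
  | just t A => just (Tm.substT s x t) (A.subst s x)
  | all y A => if y = x then all y A else all y (A.subst s x)
  | ex y A => if y = x then ex y A else ex y (A.subst s x)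

end Fm

/-- `FreeFor s x A`: the term `s` is substitutable for the variable `x` in the
formula `A`. -/
def FreeFor (s : Tm) (x : ℕ) : Fm → Prop
  | .atom _ => True
  | .delta => True
  | .bot => True
  | .imp A B => FreeFor s x A ∧ FreeFor s x B
  | .just t A => FreeForT s x t ∧ FreeFor s x A
  | .all y A => x ∈ Fm.fv (.all y A) → (y ∉ s.fv ∧ FreeFor s x A)
  | .ex y A => x ∈ Fm.fv (.ex y A) → (y ∉ s.fv ∧ FreeFor s x A)

open Fm

/-- Provability in Fitting's quantified logic of proofs QLP, extended by the
fixed point axiom `fpAx` and with axiom necessitation restricted to the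
primitive term specification `F`. Axioms: propositional tautologies (via a
Hilbert basis), quantifier axioms Q1–Q4, jK, jT, j4, Sum, and the uniformity
formula UF; rules: modus ponens MP, generalization Gen, axiom necessitation AN,
and quantified necessitation qNec. -/
inductive Prov (F : Fm → Prop) (fpAx : Fm) : Fm → Prop
  | ax1 (A B : Fm) : Prov F fpAx (imp A (imp B A))
  | ax2 (A B C : Fm) : Prov F fpAx (imp (imp A (imp B C)) (imp (imp A B) (imp A C)))
  | ax3 (A B : Fm) : Prov F fpAx (imp (imp (neg A) (neg B)) (imp B A))
  | q1 {t : Tm} {x : ℕ} {A : Fm} (h : FreeFor t x A) :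
      Prov F fpAx (imp (all x A) (A.subst t x))
  | q2 {x : ℕ} {A B : Fm} (h : x ∉ A.fv) :
      Prov F fpAx (imp (all x (imp A B)) (imp A (all x B)))
  | q3 {t : Tm} {x : ℕ} {A : Fm} (h : FreeFor t x A) :
      Prov F fpAx (imp (A.subst t x) (ex x A))
  | q4 {x : ℕ} {A B : Fm} (h : x ∉ B.fv) :
      Prov F fpAx (imp (all x (imp A B)) (imp (ex x A) B))
  | jk (s t : Tm) (A B : Fm) :
      Prov F fpAx (imp (just s (imp A B)) (imp (just t A) (just (.app s t) B)))
  | jt (t : Tm) (A : Fm) : Prov F fpAx (imp (just t A) A)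
  | j4 (t : Tm) (A : Fm) :
      Prov F fpAx (imp (just t A) (just (.bang t) (just t A)))
  | sum1 (s t : Tm) (A : Fm) : Prov F fpAx (imp (just s A) (just (.sum s t) A))
  | sum2 (s t : Tm) (A : Fm) : Prov F fpAx (imp (just s A) (just (.sum t s) A))
  | uf {y : ℕ} {t : Tm} {x : ℕ} {A : Fm} (hy1 : y ∉ t.fv) (hy2 : y ∉ A.fv) :
      Prov F fpAx (imp (ex y (just (.var y) (all x (just t A))))
        (just (.uall t x) (all x A)))
  | an {A : Fm} : F A → Prov F fpAx A
  | fp : Prov F fpAx fpAx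
  | mp {A B : Fm} : Prov F fpAx (imp A B) → Prov F fpAx A → Prov F fpAx B
  | gen {A : Fm} (x : ℕ) : Prov F fpAx A → Prov F fpAx (all x A)
  | qnec {x : ℕ} {A : Fm} (h : x ∉ A.fv) :
      Prov F fpAx A → Prov F fpAx (ex x (just (.var x) A))

/-!
Write `□A` for `(∃x) x:A`. By jT, Gen and Q4, `□¬δ → ¬δ`, so the first disjunct of the fixed
point refutes `δ`; hence `δ` implies the second disjunct `E ∧ ¬□(δ → E)`. In particular `δ → E`
is a theorem, so qNec gives `□(δ → E)`, which contradicts the second disjunct: thus `¬δ` is a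
theorem. Applying qNec once more yields `□¬δ`, the first disjunct, hence `δ`.
-/

/-- Hypotheses are only ever combined by MP (never generalized or necessitated), which is what
makes the deduction theorem `Derives.deduction` hold. -/
inductive Derives (F : Fm → Prop) (fp : Fm) (Γ : List Fm) : Fm → Prop
  | hyp {A : Fm} : A ∈ Γ → Derives F fp Γ A
  | thm {A : Fm} : Prov F fp A → Derives F fp Γ A
  | mp {A B : Fm} : Derives F fp Γ (imp A B) → Derives F fp Γ A → Derives F fp Γ B

variable {F : Fm → Prop} {fp : Fm}

theorem Prov.imp_self (A : Fm) : Prov F fp (imp A A) :=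
  mp (mp (ax2 A (imp A A) A) (ax1 A (imp A A))) (ax1 A A)

theorem Prov.imp_trans {A B C : Fm} (hAB : Prov F fp (imp A B)) (hBC : Prov F fp (imp B C)) :
    Prov F fp (imp A C) :=
  mp (mp (ax2 A B C) (mp (ax1 _ A) hBC)) hAB

namespace Derives

theorem deduction {Γ : List Fm} {A B : Fm} (h : Derives F fp (B :: Γ) A) :
    Derives F fp Γ (imp B A) := by
  induction h with
  | hyp hA =>
    rcases List.mem_cons.1 hA with rfl | hA
    · exact thm (Prov.imp_self _)
    · exact mp (thm (Prov.ax1 _ B)) (hyp hA)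
  | thm hA => exact mp (thm (Prov.ax1 _ B)) (thm hA)
  | mp _ _ ihAB ihA => exact mp (mp (thm (Prov.ax2 B _ _)) ihAB) ihA

theorem toProv {A : Fm} (h : Derives F fp [] A) : Prov F fp A := by
  induction h with
  | hyp hA => simp at hA
  | thm hA => exact hA
  | mp _ _ ihAB ihA => exact Prov.mp ihAB ihA

end Derives

namespace Prov

open Derives in
theorem neg_imp_neg {A B : Fm} (h : Prov F fp (imp A B)) : Prov F fp (imp (neg B) (neg A)) :=
  toProv <| deduction <| deduction <|
    .mp (hyp (A := neg B) (by simp)) (.mp (thm h) (hyp (by simp)))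

open Derives in
theorem not_not_intro (A : Fm) : Prov F fp (imp A (neg (neg A))) :=
  toProv <| deduction <| deduction <| .mp (hyp (A := neg A) (by simp)) (hyp (by simp))

theorem not_not_elim (A : Fm) : Prov F fp (imp (neg (neg A)) A) :=
  mp (ax3 A (neg (neg A))) (not_not_intro (neg A))

theorem bot_elim (A : Fm) : Prov F fp (imp bot A) :=
  imp_trans (ax1 bot (neg A)) (not_not_elim A)

open Derives in
theorem neg_imp (A C : Fm) : Prov F fp (imp (neg A) (imp A C)) :=
  toProv <| deduction <| deduction <|
    .mp (thm (bot_elim C)) (.mp (hyp (A := neg A) (by simp)) (hyp (by simp)))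

open Derives in
theorem disj_inl (A B : Fm) : Prov F fp (imp A (disj A B)) :=
  toProv <| deduction <| deduction <|
    .mp (thm (bot_elim B)) (.mp (hyp (A := neg A) (by simp)) (hyp (by simp)))

theorem conj_left (A B : Fm) : Prov F fp (imp (conj A B) A) :=
  imp_trans (neg_imp_neg (neg_imp A (neg B))) (not_not_elim A)

theorem conj_right (A B : Fm) : Prov F fp (imp (conj A B) B) :=
  imp_trans (neg_imp_neg (ax1 (neg B) A)) (not_not_elim B)

theorem neg_of_imp_neg {A B : Fm} (h : Prov F fp (imp A (neg B))) (hB : Prov F fp B) :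
    Prov F fp (neg A) :=
  mp (mp (ax2 A B bot) h) (mp (ax1 B A) hB)

open Derives in
theorem imp_right_of_imp_disj {D A B : Fm} (hD : Prov F fp (imp D (disj A B)))
    (hA : Prov F fp (imp A (neg D))) : Prov F fp (imp D B) :=
  toProv <| deduction <| .mp (.mp (thm hD) (hyp (by simp))) <|
    deduction <| .mp (.mp (thm hA) (hyp (by simp))) (hyp (by simp))

theorem exists_just_imp {x : ℕ} {A : Fm} (hx : x ∉ A.fv) :
    Prov F fp (imp (ex x (just (.var x) A)) A) :=
  mp (q4 hx) (gen x (jt (.var x) A))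

theorem bot_of_examiner_fixpoint {D E : Fm} {x y : ℕ} (hx : x ∉ D.fv) (hyD : y ∉ D.fv)
    (hyE : y ∉ E.fv)
    (hfix : Prov F fp (iff' D (disj (ex x (just (.var x) (neg D)))
      (conj E (neg (ex y (just (.var y) (imp D E)))))))) :
    Prov F fp bot := by
  have hxneg : x ∉ (neg D).fv := by simpa [neg, fv] using hx
  have hto := mp (conj_left _ _) hfix
  have hfrom := mp (conj_right _ _) hfix
  have hsecond := imp_right_of_imp_disj hto (exists_just_imp hxneg)
  have hDE : Prov F fp (imp D E) := imp_trans hsecond (conj_left _ _)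
  have hproofDE := qnec (x := y) (by simp [fv, hyD, hyE]) hDE
  have hnD : Prov F fp (neg D) := neg_of_imp_neg (imp_trans hsecond (conj_right _ _)) hproofDE
  exact mp hnD (mp hfrom (mp (disj_inl _ _) (qnec hxneg hnD)))

end Prov

/-- The Examiner Paradox in QLP: QLP extended with a fixed point constant `δ`
and the axiom `δ ↔ [(∃x)x:¬δ ∨ (E ∧ ¬(∃x)x:(δ → E))]` for a propositional
letter `E`, with empty primitive term specification, is inconsistent. -/
theorem qlp_examiner_inconsistent (e : ℕ) :
    Prov (fun _ => False)
      (iff' delta (disj (ex 0 (just (.var 0) (neg delta)))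
        (conj (atom e) (neg (ex 0 (just (.var 0) (imp delta (atom e))))))))
      bot :=
  Prov.bot_of_examiner_fixpoint (by simp [fv]) (by simp [fv]) (by simp [fv]) Prov.fp
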